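/- arXiv:math/0210249 — 5 statements merged into one kernel-verified Lean document; each statement's English description precedes it below -/
import Mathlib

section
/- Let r : ℕ → ℝ be a sequence of positive reals decreasing to 0, and define for x : ℕ → ℂ the quantity ‖x‖_r = limsup_{n→∞} |x_n|^{r_n} ∈ [0,∞]. Then the set F = {x : ‖x‖_r < ∞} is a subring (ℂ-subalgebra without scalar continuity) of ℂ^ℕ, i.e. it is closed under addition and multiplication. -/
open Filter

noncomputable def unorm (r : ℕ → ℝ) (x : ℕ → ℂ) : ENNReal :=
  Filter.limsup (fun n => (‖x n‖₊ : ENNReal) ^ (r n)) Filter.atTop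

theorem stmt2 (r : ℕ → ℝ) (hpos : ∀ n, 0 < r n) (hanti : Antitone r)
    (hlim : Tendsto r atTop (nhds 0)) (x y : ℕ → ℂ)
    (hx : unorm r x < ⊤) (hy : unorm r y < ⊤) :
    unorm r (x + y) < ⊤ ∧ unorm r (x * y) < ⊤ := by
  set Cx := unorm r x + 1 with hCx
  set Cy := unorm r y + 1 with hCy
  have hCxt : Cx ≠ ⊤ := by simp [hCx, ENNReal.add_ne_top, hx.ne]
  have hCyt : Cy ≠ ⊤ := by simp [hCy, ENNReal.add_ne_top, hy.ne]
  have hEx : ∀ᶠ n in atTop, (‖x n‖₊ : ENNReal) ^ (r n) ≤ Cx := by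
    have := Filter.eventually_lt_of_limsup_lt (ENNReal.lt_add_right hx.ne one_ne_zero)
    exact this.mono fun n h => h.le
  have hEy : ∀ᶠ n in atTop, (‖y n‖₊ : ENNReal) ^ (r n) ≤ Cy := by
    have := Filter.eventually_lt_of_limsup_lt (ENNReal.lt_add_right hy.ne one_ne_zero)
    exact this.mono fun n h => h.le
  set C := max Cx Cy with hC
  have hCt : C ≠ ⊤ := by simp [hC, hCxt, hCyt]
  constructor
  · have hbound : ∀ᶠ n in atTop, (‖(x + y) n‖₊ : ENNReal) ^ (r n) ≤ (2 : ENNReal) ^ (r 0) * C := by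
      filter_upwards [hEx, hEy] with n hxn hyn
      have h1 : (‖(x + y) n‖₊ : ENNReal) ≤ 2 * max (‖x n‖₊ : ENNReal) (‖y n‖₊ : ENNReal) := by
        calc (‖(x + y) n‖₊ : ENNReal) ≤ (‖x n‖₊ : ENNReal) + (‖y n‖₊ : ENNReal) := by
              exact_mod_cast (nnnorm_add_le (x n) (y n))
          _ ≤ 2 * max (‖x n‖₊ : ENNReal) (‖y n‖₊ : ENNReal) := by
              rw [two_mul]
              exact add_le_add (le_max_left _ _) (le_max_right _ _)
      calc (‖(x + y) n‖₊ : ENNReal) ^ (r n)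
          ≤ (2 * max (‖x n‖₊ : ENNReal) (‖y n‖₊ : ENNReal)) ^ (r n) :=
            ENNReal.rpow_le_rpow h1 (hpos n).le
        _ = (2 : ENNReal) ^ (r n) * (max (‖x n‖₊ : ENNReal) (‖y n‖₊ : ENNReal)) ^ (r n) :=
            ENNReal.mul_rpow_of_nonneg _ _ (hpos n).le
        _ ≤ (2 : ENNReal) ^ (r 0) * C := by
            apply mul_le_mul'
            · exact ENNReal.rpow_le_rpow_of_exponent_le (by norm_num) (hanti (Nat.zero_le n))
            · rcases max_cases (‖x n‖₊ : ENNReal) (‖y n‖₊ : ENNReal) with ⟨h, _⟩ | ⟨h, _⟩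
              · rw [h]; exact le_trans hxn (le_max_left _ _)
              · rw [h]; exact le_trans hyn (le_max_right _ _)
    have : unorm r (x + y) ≤ (2 : ENNReal) ^ (r 0) * C := Filter.limsup_le_of_le (by isBoundedDefault) hbound
    refine lt_of_le_of_lt this ?_
    exact ENNReal.mul_lt_top (ENNReal.rpow_lt_top_of_nonneg (hpos 0).le (by norm_num : (2:ENNReal) ≠ ⊤)) hCt.lt_top
  · have hbound : ∀ᶠ n in atTop, (‖(x * y) n‖₊ : ENNReal) ^ (r n) ≤ Cx * Cy := by
      filter_upwards [hEx, hEy] with n hxn hyn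
      have h1 : (‖(x * y) n‖₊ : ENNReal) = (‖x n‖₊ : ENNReal) * (‖y n‖₊ : ENNReal) := by
        push_cast [Pi.mul_apply, nnnorm_mul]; ring
      rw [h1, ENNReal.mul_rpow_of_nonneg _ _ (hpos n).le]
      exact mul_le_mul' hxn hyn
    have : unorm r (x * y) ≤ Cx * Cy := Filter.limsup_le_of_le (by isBoundedDefault) hbound
    exact lt_of_le_of_lt this (ENNReal.mul_lt_top hCxt.lt_top hCyt.lt_top)
end

section
/- Let r : ℕ → ℝ be a sequence of positive reals decreasing to 0, F = {x : ℕ → ℂ | limsup |x_n|^{r_n} < ∞} and K = {x : ℕ → ℂ | limsup |x_n|^{r_n} = 0}. Then K is an ideal of the ring F: K is an additive subgroup and for all x ∈ F, k ∈ K, the pointwise product x·k lies in K. -/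
/-!
`unorm r` is submultiplicative on finite values and, because the exponents are bounded by `r 0`,
satisfies `unorm r (x - y) ≤ 2 ^ r 0 * max (unorm r x) (unorm r y)`; both follow termwise from
`(a * b) ^ s = a ^ s * b ^ s` and `(a + b) ^ s ≤ (2 * max a b) ^ s`. A finite multiple of `0`
being `0`, the sequences with `unorm r = 0` form an ideal of those with `unorm r < ⊤`.
-/

open Filter

lemma ENNReal.rpow_add_le_two_rpow_mul_max_rpow (a b : ENNReal) {s : ℝ} (hs : 0 ≤ s) :
    (a + b) ^ s ≤ 2 ^ s * max (a ^ s) (b ^ s) :=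
  calc (a + b) ^ s ≤ (2 * max a b) ^ s := by
        gcongr
        rw [two_mul]
        exact add_le_add le_sup_left le_sup_right
    _ = 2 ^ s * max (a ^ s) (b ^ s) := by
        rw [ENNReal.mul_rpow_of_nonneg _ _ hs, (ENNReal.monotone_rpow_of_nonneg hs).map_max]

section unorm

variable {r : ℕ → ℝ}

lemma unorm_zero (hr : ∀ n, 0 < r n) : unorm r 0 = 0 := by
  simp [unorm, ENNReal.zero_rpow_of_pos (hr _)]

lemma unorm_mul_le (hr : ∀ n, 0 ≤ r n) {x y : ℕ → ℂ} (hx : unorm r x ≠ ⊤) (hy : unorm r y ≠ ⊤) :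
    unorm r (x * y) ≤ unorm r x * unorm r y := by
  have hsplit : (fun n => (‖(x * y) n‖₊ : ENNReal) ^ r n) =
      (fun n => (‖x n‖₊ : ENNReal) ^ r n) * fun n => (‖y n‖₊ : ENNReal) ^ r n := by
    funext n
    simp only [Pi.mul_apply, nnnorm_mul, ENNReal.coe_mul, ENNReal.mul_rpow_of_nonneg _ _ (hr n)]
  rw [unorm, hsplit]
  exact ENNReal.limsup_mul_le' (.inr hy) (.inl hx)

lemma unorm_sub_le (hr : ∀ n, 0 ≤ r n) (hanti : Antitone r) (x y : ℕ → ℂ) :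
    unorm r (x - y) ≤ 2 ^ r 0 * max (unorm r x) (unorm r y) := by
  have hterm : ∀ n, (‖(x - y) n‖₊ : ENNReal) ^ r n ≤
      2 ^ r 0 * max ((‖x n‖₊ : ENNReal) ^ r n) ((‖y n‖₊ : ENNReal) ^ r n) := fun n =>
    calc (‖(x - y) n‖₊ : ENNReal) ^ r n ≤ ((‖x n‖₊ : ENNReal) + ‖y n‖₊) ^ r n := by
          gcongr
          · exact hr n
          · exact_mod_cast nnnorm_sub_le (x n) (y n)
      _ ≤ 2 ^ r n * max ((‖x n‖₊ : ENNReal) ^ r n) ((‖y n‖₊ : ENNReal) ^ r n) :=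
          ENNReal.rpow_add_le_two_rpow_mul_max_rpow _ _ (hr n)
      _ ≤ 2 ^ r 0 * max ((‖x n‖₊ : ENNReal) ^ r n) ((‖y n‖₊ : ENNReal) ^ r n) := by
          gcongr
          · norm_num
          · exact hanti n.zero_le
  calc unorm r (x - y) ≤ limsup (fun n => 2 ^ r 0 *
        max ((‖x n‖₊ : ENNReal) ^ r n) ((‖y n‖₊ : ENNReal) ^ r n)) atTop :=
        limsup_le_limsup (Eventually.of_forall hterm)
    _ = 2 ^ r 0 * max (unorm r x) (unorm r y) := by
        rw [ENNReal.limsup_const_mul_of_ne_top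
          (ENNReal.rpow_ne_top_of_nonneg (hr 0) ENNReal.ofNat_ne_top), limsup_max]
        rfl

end unorm

theorem stmt3_general (r : ℕ → ℝ) (hpos : ∀ n, 0 < r n) (hanti : Antitone r) :
    unorm r 0 = 0 ∧
    (∀ k k' : ℕ → ℂ, unorm r k = 0 → unorm r k' = 0 → unorm r (k - k') = 0) ∧
    (∀ x k : ℕ → ℂ, unorm r x < ⊤ → unorm r k = 0 → unorm r (x * k) = 0) := by
  have hr : ∀ n, 0 ≤ r n := fun n => (hpos n).le
  refine ⟨unorm_zero hpos, fun k k' hk hk' => ?_, fun x k hx hk => ?_⟩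
  · simpa [hk, hk'] using unorm_sub_le hr hanti k k'
  · have hle := unorm_mul_le hr hx.ne (hk.trans_ne ENNReal.zero_ne_top)
    rwa [hk, mul_zero, nonpos_iff_eq_zero] at hle

theorem stmt3 (r : ℕ → ℝ) (hpos : ∀ n, 0 < r n) (hanti : Antitone r)
    (hlim : Tendsto r atTop (nhds 0)) :
    unorm r 0 = 0 ∧
    (∀ k k' : ℕ → ℂ, unorm r k = 0 → unorm r k' = 0 → unorm r (k - k') = 0) ∧
    (∀ x k : ℕ → ℂ, unorm r x < ⊤ → unorm r k = 0 → unorm r (x * k) = 0) :=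
  stmt3_general r hpos hanti
end

section
/- Let r : ℕ → ℝ be a positive sequence decreasing to 0. Define d(x,y) = limsup_{n→∞} |x_n - y_n|^{r_n} for x,y : ℕ → ℂ with d(x,y) < ∞. Then d satisfies the ultrametric inequality: d(x,z) ≤ max(d(x,y), d(y,z)). -/
/-!
Termwise, `|a - c| ≤ 2 max(|a - b|, |b - c|)` bounds the `n`-th term of `d(x, z)` by `2 ^ r n` times
the larger of the `n`-th terms of `d(x, y)` and `d(y, z)`. Since `r n → 0`, the factor `2 ^ r n`
tends to `1` and is invisible to the limsup, and the limsup of a maximum is the maximum of the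
limsups.
-/

open Filter

noncomputable def udist (r : ℕ → ℝ) (x y : ℕ → ℂ) : ENNReal :=
  Filter.limsup (fun n => (‖x n - y n‖₊ : ENNReal) ^ (r n)) Filter.atTop

open scoped ENNReal NNReal Topology

namespace ENNReal

lemma add_rpow_le_two_rpow_mul_max_rpow {p : ℝ} (a b : ℝ≥0∞) (hp : 0 ≤ p) :
    (a + b) ^ p ≤ 2 ^ p * max (a ^ p) (b ^ p) := calc
  (a + b) ^ p ≤ (2 * max a b) ^ p := by rw [two_mul]; gcongr <;> simp
  _ = 2 ^ p * max (a ^ p) (b ^ p) := by rw [mul_rpow_of_nonneg _ _ hp, max_rpow hp]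

lemma tendsto_coe_rpow_nhds_one {ι : Type*} {l : Filter ι} {c : ℝ≥0} (hc : c ≠ 0) {r : ι → ℝ}
    (hr : Tendsto r l (𝓝 0)) : Tendsto (fun i => (c : ℝ≥0∞) ^ r i) l (𝓝 1) := by
  have hcont : Continuous fun y : ℝ => c ^ y :=
    continuous_iff_continuousAt.2 fun y => (NNReal.continuousAt_rpow (.inl hc)).comp (by fun_prop)
  simpa [Function.comp_def, ← coe_rpow_of_ne_zero hc] using
    (continuous_coe.tendsto _).comp ((hcont.tendsto 0).comp hr)

lemma limsup_mul_le_of_tendsto_one {ι : Type*} {l : Filter ι} [l.NeBot] {u v : ι → ℝ≥0∞}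
    (hu : Tendsto u l (𝓝 1)) : limsup (u * v) l ≤ limsup v l := by
  have h := limsup_mul_le' (u := u) (v := v) (f := l)
    (by simp [hu.limsup_eq]) (by simp [hu.limsup_eq])
  rwa [hu.limsup_eq, one_mul] at h

end ENNReal

lemma edist_rpow_le_two_rpow_mul_max {α : Type*} [PseudoEMetricSpace α] {p : ℝ} (hp : 0 ≤ p)
    (a b c : α) : edist a c ^ p ≤ 2 ^ p * max (edist a b ^ p) (edist b c ^ p) :=
  (ENNReal.rpow_le_rpow (edist_triangle a b c) hp).trans
    (ENNReal.add_rpow_le_two_rpow_mul_max_rpow _ _ hp)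

lemma udist_eq_limsup_edist (r : ℕ → ℝ) (x y : ℕ → ℂ) :
    udist r x y = limsup (fun n => edist (x n) (y n) ^ r n) atTop := by
  simp only [udist, edist_eq_enorm_sub, enorm_eq_nnnorm]

theorem stmt4_general (r : ℕ → ℝ) (hpos : ∀ n, 0 < r n)
    (hlim : Tendsto r atTop (nhds 0)) (x y z : ℕ → ℂ) :
    udist r x z ≤ max (udist r x y) (udist r y z) := by
  simp only [udist_eq_limsup_edist]
  calc limsup (fun n => edist (x n) (z n) ^ r n) atTop
      ≤ limsup ((fun n => (2 : ℝ≥0∞) ^ r n) *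
          fun n => max (edist (x n) (y n) ^ r n) (edist (y n) (z n) ^ r n)) atTop :=
        limsup_le_limsup (.of_forall fun n => edist_rpow_le_two_rpow_mul_max (hpos n).le _ _ _)
    _ ≤ limsup (fun n => max (edist (x n) (y n) ^ r n) (edist (y n) (z n) ^ r n)) atTop :=
        ENNReal.limsup_mul_le_of_tendsto_one
          (by exact_mod_cast ENNReal.tendsto_coe_rpow_nhds_one two_ne_zero hlim)
    _ = _ := limsup_max

theorem stmt4 (r : ℕ → ℝ) (hpos : ∀ n, 0 < r n) (hanti : Antitone r)
    (hlim : Tendsto r atTop (nhds 0)) (x y z : ℕ → ℂ) :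
    udist r x z ≤ max (udist r x y) (udist r y z) :=
  stmt4_general r hpos hlim x y z
end

section
/- Let r : ℕ → ℝ be a positive sequence decreasing to 0 and ‖x‖_r = limsup |x_n|^{r_n}. Then for all x, y : ℕ → ℂ, ‖x·y‖_r ≤ ‖x‖_r · ‖y‖_r (pointwise product, with the convention 0·∞ handled by assuming both norms are finite). -/
open Filter

theorem stmt5 (r : ℕ → ℝ) (hpos : ∀ n, 0 < r n) (hanti : Antitone r)
    (hlim : Tendsto r atTop (nhds 0)) (x y : ℕ → ℂ)
    (hx : unorm r x < ⊤) (hy : unorm r y < ⊤) :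
    unorm r (x * y) ≤ unorm r x * unorm r y := by
  have heq : (fun n => (‖(x * y) n‖₊ : ENNReal) ^ (r n)) =
      (fun n => (‖x n‖₊ : ENNReal) ^ (r n)) * (fun n => (‖y n‖₊ : ENNReal) ^ (r n)) := by
    funext n
    simp [Pi.mul_apply, nnnorm_mul, ENNReal.coe_mul,
      ENNReal.mul_rpow_of_nonneg _ _ (hpos n).le]
  unfold unorm
  rw [heq]
  exact ENNReal.limsup_mul_le' (Or.inr hy.ne) (Or.inl hx.ne)
end

section
/- Let (r^m) be a decreasing family of weight sequences (r^{m+1}_n ≤ r^m_n, each decreasing to 0 in n). Call g : ℝ≥0 → ℝ≥0 r-moderate if g is increasing and for all m there exists M such that sup_n g(x^{1/r^m_n})^{r^M_n} < ∞ for all x > 0. Then g is r-moderate iff g is increasing and for all m there exists M with g(F^+_{r^m}) ⊆ F^+_{r^M}, where F^+_{r^m} = {C : ℕ → ℝ≥0 | limsup C_n^{r^m_n} < ∞}. -/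
open Filter

theorem stmt16 (r : ℕ → ℕ → ℝ) (hpos : ∀ m n, 0 < r m n)
    (hanti : ∀ m, Antitone (r m)) (hlim : ∀ m, Tendsto (r m) atTop (nhds 0))
    (hmono : ∀ m n, r (m + 1) n ≤ r m n)
    (g : NNReal → NNReal) :
    (Monotone g ∧ ∀ m, ∃ M, ∀ x : NNReal, 0 < x →
        ∃ B : NNReal, ∀ n, (g (x ^ (1 / r m n))) ^ (r M n) ≤ B) ↔
      (Monotone g ∧ ∀ m, ∃ M, ∀ C : ℕ → NNReal,
        Filter.limsup (fun n => (C n : ENNReal) ^ (r m n)) atTop < ⊤ →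
        Filter.limsup (fun n => (g (C n) : ENNReal) ^ (r M n)) atTop < ⊤) := by
  constructor
  · rintro ⟨hg, h⟩
    refine ⟨hg, fun m => ?_⟩
    obtain ⟨M, hM⟩ := h m
    refine ⟨M, fun C hC => ?_⟩
    set b : ENNReal := limsup (fun n => (C n : ENNReal) ^ r m n) atTop + 1 with hb
    have hbne : b ≠ ⊤ := ENNReal.add_ne_top.mpr ⟨hC.ne, ENNReal.one_ne_top⟩
    have hlt : ∀ᶠ n in atTop, (C n : ENNReal) ^ r m n < b :=
      eventually_lt_of_limsup_lt (ENNReal.lt_add_right hC.ne one_ne_zero)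
    set x : NNReal := max b.toNNReal 1 with hxdef
    have hx : 0 < x := lt_of_lt_of_le one_pos (le_max_right _ _)
    obtain ⟨B, hB⟩ := hM x hx
    have hle : ∀ᶠ n in atTop, ((g (C n) : ENNReal)) ^ r M n ≤ (B : ENNReal) := by
      filter_upwards [hlt] with n hn
      have h1 : (C n) ^ r m n ≤ x := by
        have hbx : b ≤ (x : ENNReal) := by
          rw [← ENNReal.coe_toNNReal hbne]
          exact_mod_cast le_max_left _ _
        have : ((C n : ENNReal) ^ r m n) ≤ (x : ENNReal) := hn.le.trans hbx
        rwa [← ENNReal.coe_rpow_of_nonneg _ (hpos m n).le, ENNReal.coe_le_coe] at this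
      have h2 : C n ≤ x ^ (1 / r m n) := by
        have h3 := NNReal.rpow_le_rpow h1 (one_div_nonneg.mpr (hpos m n).le)
        rwa [← NNReal.rpow_mul, mul_one_div_cancel (hpos m n).ne', NNReal.rpow_one] at h3
      have h4 : (g (C n)) ^ r M n ≤ B :=
        le_trans (NNReal.rpow_le_rpow (hg h2) (hpos M n).le) (hB n)
      rw [← ENNReal.coe_rpow_of_nonneg _ (hpos M n).le]
      exact_mod_cast h4
    exact lt_of_le_of_lt (limsup_le_of_le (by isBoundedDefault) hle) ENNReal.coe_lt_top
  · rintro ⟨hg, h⟩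
    refine ⟨hg, fun m => ?_⟩
    obtain ⟨M, hM⟩ := h m
    refine ⟨M, fun x hx => ?_⟩
    have hC : limsup (fun n => ((x ^ (1 / r m n) : NNReal) : ENNReal) ^ r m n) atTop < ⊤ := by
      have heq : ∀ n, ((x ^ (1 / r m n) : NNReal) : ENNReal) ^ r m n = (x : ENNReal) := by
        intro n
        rw [← ENNReal.coe_rpow_of_nonneg _ (hpos m n).le, ← NNReal.rpow_mul,
          one_div_mul_cancel (hpos m n).ne', NNReal.rpow_one]
      simp only [heq]
      rw [limsup_const]
      exact ENNReal.coe_lt_top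
    have hlim2 := hM (fun n => x ^ (1 / r m n)) hC
    set b : ENNReal :=
      limsup (fun n => ((g (x ^ (1 / r m n)) : ENNReal)) ^ r M n) atTop + 1 with hb
    have hbne : b ≠ ⊤ := ENNReal.add_ne_top.mpr ⟨hlim2.ne, ENNReal.one_ne_top⟩
    have hev : ∀ᶠ n in atTop, (g (x ^ (1 / r m n)) : ENNReal) ^ r M n < b :=
      eventually_lt_of_limsup_lt (ENNReal.lt_add_right hlim2.ne one_ne_zero)
    obtain ⟨N, hN⟩ := eventually_atTop.mp hev
    refine ⟨max b.toNNReal ((Finset.range N).sup fun n => (g (x ^ (1 / r m n))) ^ r M n),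
      fun n => ?_⟩
    rcases lt_or_ge n N with hn | hn
    · exact le_max_of_le_right (Finset.le_sup (f := fun n => (g (x ^ (1 / r m n))) ^ r M n) (Finset.mem_range.mpr hn))
    · refine le_max_of_le_left ?_
      have h5 := (hN n hn).le
      rwa [← ENNReal.coe_rpow_of_nonneg _ (hpos M n).le, ← ENNReal.coe_toNNReal hbne,
        ENNReal.coe_le_coe] at h5
end
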